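/- The convex hull in ℝ⁴ of the two skew equilateral triangles {(2,1,1,0),(1,1,0,0),(1,0,1,0)} and {(2,0,0,0),(1,1,1,1),(1,1,1,−1)} is a 4-dimensional polytope with 4-dimensional volume 1/4. -/

import Mathlib

open MeasureTheory

/-- Cell 𝒫₄ of the D₄ honeycomb: the convex hull of two skew equilateral
triangles. -/
noncomputable def cellP4 : Set (Fin 4 → ℝ) :=
  convexHull ℝ
    {![2,1,1,0], ![1,1,0,0], ![1,0,1,0], ![2,0,0,0], ![1,1,1,1], ![1,1,1,-1]}

/-!
The vertices satisfy `(2,1,1,0) + (1,1,0,0) + (1,0,1,0) = (2,0,0,0) + (1,1,1,1) + (1,1,1,-1)`,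
so in a convex combination the smallest weight on the second triangle can be moved onto the
first one. Hence the cell is the union of the three simplices spanned by the first triangle and
two vertices of the second; any two of them are separated by a hyperplane. Each simplex has
volume `|det| / 4! = 2 / 24`, by the formula for the volume of a simplex as an affine image of
the order simplex `0 ≤ y₀ ≤ ⋯ ≤ y₃ ≤ 1`, whose `4!` images under permutations of the coordinates
tile the unit cube.
-/

open Set
open scoped Nat Pointwise

section OrderSimplex

variable {n : ℕ}

def orderSimplex (n : ℕ) : Set (Fin n → ℝ) := Icc 0 1 ∩ {y | Monotone y}

lemma isClosed_orderSimplex : IsClosed (orderSimplex n) := isClosed_Icc.inter isClosed_monotone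

lemma convex_orderSimplex : Convex ℝ (orderSimplex n) := by
  refine (convex_Icc 0 1).inter fun y hy z hz a b ha hb _ i j hij => ?_
  simp only [Pi.add_apply, Pi.smul_apply, smul_eq_mul]
  gcongr
  exacts [hy hij, hz hij]

lemma measurePreserving_comp_perm (σ : Equiv.Perm (Fin n)) :
    MeasurePreserving (fun y : Fin n → ℝ => y ∘ σ) := by
  have : (fun y : Fin n → ℝ => y ∘ σ) = MeasurableEquiv.piCongrLeft (fun _ => ℝ) σ.symm := by
    funext y i
    simp [MeasurableEquiv.piCongrLeft, Equiv.piCongrLeft]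
  exact this ▸ volume_measurePreserving_piCongrLeft _ _

lemma volume_setOf_not_injective : volume {y : Fin n → ℝ | ¬ Function.Injective y} = 0 := by
  let d (i j : Fin n) : (Fin n → ℝ) →ₗ[ℝ] ℝ :=
    (LinearMap.proj i : (Fin n → ℝ) →ₗ[ℝ] ℝ) - LinearMap.proj j
  have hsub : {y : Fin n → ℝ | ¬ Function.Injective y} ⊆
      ⋃ (i : Fin n) (j : Fin n) (_ : i ≠ j), (LinearMap.ker (d i j) : Set _) := by
    intro y hy
    simp only [mem_ofPred_eq, Function.Injective, not_forall] at hy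
    obtain ⟨i, j, hij, hne⟩ := hy
    simp only [mem_iUnion]
    exact ⟨i, j, hne, by simp [d, hij]⟩
  refine measure_mono_null hsub <| measure_iUnion_null fun i => measure_iUnion_null fun j =>
    measure_iUnion_null fun hij => Measure.addHaar_submodule _ _ fun htop => ?_
  have : Pi.single i (1 : ℝ) ∈ LinearMap.ker (d i j) := htop ▸ trivial
  simp [d, hij.symm] at this

lemma iUnion_preimage_comp_perm_orderSimplex :
    ⋃ σ : Equiv.Perm (Fin n), (· ∘ σ) ⁻¹' orderSimplex n = Icc 0 1 := by
  refine Subset.antisymm (iUnion_subset fun σ y ⟨⟨h0, h1⟩, _⟩ => ⟨fun i => ?_, fun i => ?_⟩)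
    fun y hy => mem_iUnion.2 ⟨Tuple.sort y, ?_, Tuple.monotone_sort y⟩
  · simpa using h0 (σ.symm i)
  · simpa using h1 (σ.symm i)
  · exact ⟨fun i => hy.1 (Tuple.sort y i), fun i => hy.2 (Tuple.sort y i)⟩

lemma volume_preimage_comp_perm_inter {σ τ : Equiv.Perm (Fin n)} (h : σ ≠ τ) :
    volume ((· ∘ σ) ⁻¹' orderSimplex n ∩ (· ∘ τ) ⁻¹' orderSimplex n) = 0 := by
  refine measure_mono_null ?_ volume_setOf_not_injective
  rintro y ⟨⟨-, hσ⟩, ⟨-, hτ⟩⟩ hy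
  refine h <| Equiv.ext fun i => hy <| congrFun (?_ : y ∘ σ = y ∘ τ) i
  exact (Tuple.comp_sort_eq_comp_iff_monotone.2 hσ).trans
    (Tuple.comp_sort_eq_comp_iff_monotone.2 hτ).symm

lemma volume_orderSimplex : volume (orderSimplex n) = (n ! : ENNReal)⁻¹ := by
  have hmeas := (isClosed_orderSimplex (n := n)).measurableSet
  have hunion := measure_iUnion₀ (μ := volume) (fun σ τ h => volume_preimage_comp_perm_inter h)
    fun σ => (hmeas.preimage (measurePreserving_comp_perm σ).measurable).nullMeasurableSet
  simp only [iUnion_preimage_comp_perm_orderSimplex, Real.volume_Icc_pi, tsum_fintype,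
    fun σ => (measurePreserving_comp_perm σ).measure_preimage hmeas.nullMeasurableSet,
    Pi.one_apply, Pi.zero_apply, sub_zero, ENNReal.ofReal_one, Finset.prod_const_one,
    Finset.sum_const, Finset.card_univ, Fintype.card_perm, Fintype.card_fin, nsmul_eq_mul] at hunion
  exact ENNReal.eq_inv_of_mul_eq_one_left (by rw [hunion, mul_comm])

def orderSimplexVertex (n : ℕ) (k : Fin (n + 1)) : Fin n → ℝ :=
  fun i => if (k : ℕ) ≤ i then 1 else 0

lemma orderSimplexVertex_last : orderSimplexVertex n (Fin.last n) = 0 :=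
  funext fun i => if_neg i.is_lt.not_ge

lemma orderSimplexVertex_mem (k : Fin (n + 1)) : orderSimplexVertex n k ∈ orderSimplex n := by
  refine ⟨⟨fun i => ?_, fun i => ?_⟩, fun i j (hij : (i : ℕ) ≤ j) => ?_⟩ <;>
    simp only [orderSimplexVertex, Pi.zero_apply, Pi.one_apply] <;> split_ifs <;>
    first | omega | norm_num

lemma orderSimplex_eq_convexHull :
    orderSimplex n = convexHull ℝ (range (orderSimplexVertex n)) := by
  refine Subset.antisymm ?_ <| convexHull_min (range_subset_iff.2 orderSimplexVertex_mem)
    convex_orderSimplex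
  rintro y ⟨⟨h0, h1⟩, hy⟩
  let yExt : ℕ → ℝ := fun j => if h : j < n then y ⟨j, h⟩ else 1
  have yExt_nonneg (j : ℕ) : 0 ≤ yExt j := by
    simp only [yExt]
    split_ifs
    exacts [h0 _, zero_le_one]
  have yExt_mono : Monotone yExt := monotone_nat_of_le_succ fun j => by
    simp only [yExt]
    split_ifs with hj hj' hj'
    · exact hy (Fin.mk_le_mk.2 j.le_succ)
    · exact h1 _
    · omega
    · exact le_rfl
  let z : ℕ → ℝ := fun j => if j = 0 then 0 else yExt (j - 1)
  have z_succ (j : ℕ) : z (j + 1) = yExt j := by simp [z]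
  have z_mono : Monotone z := monotone_nat_of_le_succ fun j => by
    rcases j with _ | j
    · simpa [z_succ, z] using yExt_nonneg 0
    · simpa only [z_succ] using yExt_mono j.le_succ
  have z_partial (i : ℕ) : ∑ k ∈ Finset.range (i + 1), (z (k + 1) - z k) = yExt i := by
    rw [Finset.sum_range_sub, z_succ]; simp [z]
  -- the weight of vertex `k` is the step `z (k + 1) - z k` of `z = 0, y 0, …, y (n - 1), 1, 1, …`
  refine mem_convexHull_of_exists_fintype (fun k : Fin (n + 1) => z (k + 1) - z k)
    (orderSimplexVertex n) (fun k => sub_nonneg.2 (z_mono k.val.le_succ)) ?_ mem_range_self ?_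
  · rw [Fin.sum_univ_eq_sum_range (fun k => z (k + 1) - z k), z_partial]
    simp [yExt]
  · funext i
    have hfilter : (Finset.range (n + 1)).filter (· ≤ (i : ℕ)) = Finset.range (i + 1) := by
      ext k
      simp only [Finset.mem_filter, Finset.mem_range]
      omega
    simp only [Finset.sum_apply, Pi.smul_apply, orderSimplexVertex, smul_eq_mul, mul_ite, mul_one,
      mul_zero]
    rw [Fin.sum_univ_eq_sum_range (fun k => if k ≤ (i : ℕ) then z (k + 1) - z k else 0),
      ← Finset.sum_filter, hfilter, z_partial]
    simp [yExt]

end OrderSimplex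

section Simplex

variable {n : ℕ}

def edgeMatrix (v : Fin (n + 1) → Fin n → ℝ) : Matrix (Fin n) (Fin n) ℝ :=
  Matrix.of fun i k => (v k.castSucc - v k.succ) i

lemma last_add_toLin'_edgeMatrix (v : Fin (n + 1) → Fin n → ℝ) (k : Fin (n + 1)) :
    v (Fin.last n) + Matrix.toLin' (edgeMatrix v) (orderSimplexVertex n k) = v k := by
  induction k using Fin.reverseInduction with
  | last => simp [orderSimplexVertex_last]
  | cast k ih =>
    have : orderSimplexVertex n k.castSucc = orderSimplexVertex n k.succ + Pi.single k 1 := by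
      funext i
      simp only [orderSimplexVertex, Pi.add_apply, Pi.single_apply, Fin.val_castSucc, Fin.val_succ,
        Fin.ext_iff]
      split_ifs <;> first | omega | norm_num
    rw [this, map_add, ← add_assoc, ih, Matrix.toLin'_apply, Matrix.mulVec_single_one]
    ext i
    simp [edgeMatrix]

theorem volume_convexHull_range (v : Fin (n + 1) → Fin n → ℝ) :
    volume (convexHull ℝ (range v)) = ENNReal.ofReal (|(edgeMatrix v).det| / n !) := by
  have hrange : range v = v (Fin.last n) +ᵥ
      Matrix.toLin' (edgeMatrix v) '' range (orderSimplexVertex n) := by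
    rw [← image_vadd, ← range_comp, ← range_comp]
    exact congrArg range (funext fun k => (last_add_toLin'_edgeMatrix v k).symm)
  rw [hrange, convexHull_vadd, ← LinearMap.image_convexHull, ← orderSimplex_eq_convexHull,
    measure_vadd, Measure.addHaar_image_linearMap, LinearMap.det_toLin', volume_orderSimplex,
    ENNReal.ofReal_div_of_pos (by positivity), ENNReal.ofReal_natCast, div_eq_mul_inv]

end Simplex

section Convex

variable {E : Type*} [AddCommGroup E] [Module ℝ E] {ι : Type*} [Fintype ι]

lemma convexHull_range_eq_image_stdSimplex (v : ι → E) :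
    convexHull ℝ (range v) = Fintype.linearCombination ℝ v '' stdSimplex ℝ ι := by
  classical
  rw [← convexHull_basis_eq_stdSimplex, LinearMap.image_convexHull, ← range_comp]
  congr 2
  funext i
  simp [Fintype.linearCombination_apply, ite_smul]

lemma convexHull_union_subset_iUnion_of_sum_eq {p q : ι → E} (h : ∑ i, p i = ∑ i, q i) :
    convexHull ℝ (range p ∪ range q) ⊆ ⋃ j, convexHull ℝ (range p ∪ q '' {j}ᶜ) := by
  classical
  rw [← Sum.elim_range, convexHull_range_eq_image_stdSimplex]
  rintro _ ⟨w, ⟨hw0, hw1⟩, rfl⟩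
  rw [Fintype.sum_sum_type] at hw1
  have : Nonempty ι := by
    by_contra hι
    simp [not_nonempty_iff.1 hι] at hw1
  obtain ⟨j, -, hj⟩ := Finset.univ.exists_min_image (w ∘ Sum.inr) Finset.univ_nonempty
  let w' : ι ⊕ ι → ℝ :=
    Sum.elim (fun i => w (.inl i) + w (.inr j)) (fun i => w (.inr i) - w (.inr j))
  have hw' : ∑ s ∈ Finset.univ.erase (.inr j), w' s = 1 := by
    rw [Finset.sum_erase _ (by simp [w']), Fintype.sum_sum_type, ← hw1]
    simp [w', Finset.sum_add_distrib, Finset.sum_sub_distrib]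
  have hx : Fintype.linearCombination ℝ (Sum.elim p q) w =
      ∑ s ∈ Finset.univ.erase (.inr j), w' s • Sum.elim p q s := by
    rw [Finset.sum_erase _ (by simp [w']), Fintype.linearCombination_apply, Fintype.sum_sum_type,
      Fintype.sum_sum_type]
    simp [w', add_smul, sub_smul, Finset.sum_add_distrib, Finset.sum_sub_distrib,
      ← Finset.smul_sum, h]
  refine mem_iUnion.2
    ⟨j, hx ▸ (convex_convexHull ℝ _).sum_mem (fun s _ => ?_) hw' fun s hs => ?_⟩
  · rcases s with i | i
    · exact add_nonneg (hw0 _) (hw0 _)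
    · exact sub_nonneg.2 (hj i (Finset.mem_univ _))
  · refine subset_convexHull ℝ _ ?_
    rcases s with i | i
    · exact Or.inl (mem_range_self i)
    · exact Or.inr ⟨i, by simpa using hs, rfl⟩

end Convex

lemma measure_convexHull_inter_eq_zero {E : Type*} [NormedAddCommGroup E] [NormedSpace ℝ E]
    [MeasurableSpace E] [BorelSpace E] [FiniteDimensional ℝ E] (μ : Measure E)
    [μ.IsAddHaarMeasure] {s t : Set E} (g : E →ₗ[ℝ] ℝ) (hg : g ≠ 0) (hs : ∀ x ∈ s, 0 ≤ g x)
    (ht : ∀ x ∈ t, g x ≤ 0) : μ (convexHull ℝ s ∩ convexHull ℝ t) = 0 := by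
  have hs' := convexHull_min hs (convex_halfSpace_ge g.isLinear 0)
  have ht' := convexHull_min ht (convex_halfSpace_le g.isLinear 0)
  have hker : convexHull ℝ s ∩ convexHull ℝ t ⊆ LinearMap.ker g :=
    fun x hx => le_antisymm (ht' hx.2) (hs' hx.1)
  exact measure_mono_null hker (Measure.addHaar_submodule μ _ (LinearMap.ker_eq_top.not.2 hg))

def triangleP : Fin 3 → Fin 4 → ℝ := ![![2,1,1,0], ![1,1,0,0], ![1,0,1,0]]

def triangleQ : Fin 3 → Fin 4 → ℝ := ![![2,0,0,0], ![1,1,1,1], ![1,1,1,-1]]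

lemma sum_triangleP_eq_sum_triangleQ : ∑ i, triangleP i = ∑ i, triangleQ i := by
  ext k; fin_cases k <;> simp [triangleP, triangleQ, Fin.sum_univ_three]

lemma cellP4_eq_convexHull_union : cellP4 = convexHull ℝ (range triangleP ∪ range triangleQ) := by
  rw [cellP4]
  congr 1
  ext x
  simp only [triangleP, triangleQ, Matrix.range_cons, Matrix.range_empty, union_empty,
    union_singleton, union_insert, mem_insert_iff, mem_singleton_iff]
  tauto

def cellP4Simplex (j : Fin 3) : Fin 5 → Fin 4 → ℝ :=
  ![triangleP 0, triangleP 1, triangleP 2, triangleQ (j.succAbove 0), triangleQ (j.succAbove 1)]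

lemma range_cellP4Simplex (j : Fin 3) :
    range (cellP4Simplex j) = range triangleP ∪ triangleQ '' {j}ᶜ := by
  rw [← Fin.range_succAbove, ← range_comp]
  ext x
  simp only [cellP4Simplex, Matrix.range_cons, Matrix.range_empty, union_empty, union_singleton,
    union_insert, mem_insert_iff, mem_singleton_iff, mem_union, mem_range, Fin.exists_fin_succ,
    Fin.succ_zero_eq_one, Fin.succ_one_eq_two, IsEmpty.exists_iff, or_false, Function.comp_apply]
  tauto

lemma cellP4_eq_iUnion : cellP4 = ⋃ j, convexHull ℝ (range (cellP4Simplex j)) := by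
  simp_rw [range_cellP4Simplex, cellP4_eq_convexHull_union]
  exact (convexHull_union_subset_iUnion_of_sum_eq sum_triangleP_eq_sum_triangleQ).antisymm
    (iUnion_subset fun j => convexHull_mono (union_subset_union_right _ (image_subset_range _ _)))

lemma volume_cellP4Simplex (j : Fin 3) :
    volume (convexHull ℝ (range (cellP4Simplex j))) = ENNReal.ofReal (1 / 12) := by
  have : |(edgeMatrix (cellP4Simplex j)).det| = 2 := by
    fin_cases j <;> simp [edgeMatrix, cellP4Simplex, triangleP, triangleQ, Matrix.det_succ_row_zero,
      Fin.sum_univ_succ, Fin.succAbove] <;> norm_num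
  rw [volume_convexHull_range, this]
  norm_num [Nat.factorial]

lemma volume_cellP4Simplex_inter {j k : Fin 3} (h : j < k) :
    volume (convexHull ℝ (range (cellP4Simplex j)) ∩ convexHull ℝ (range (cellP4Simplex k))) =
      0 := by
  -- `c j k` vanishes on `triangleP` and on the vertex of `triangleQ` shared by both simplices
  let c : Fin 3 → Fin 3 → Fin 4 → ℝ :=
    ![![0, ![-1, 1, 1, 1], ![-1, 1, 1, -1]], ![0, 0, ![0, 0, 0, -1]], 0]
  refine measure_convexHull_inter_eq_zero _ (Fintype.linearCombination ℝ (c j k))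
    (DFunLike.ne_iff.2 ⟨Pi.single 3 1, ?_⟩) ?_ ?_ <;>
  fin_cases j <;> fin_cases k <;> first
    | exact absurd h (by decide)
    | simp [c, Fintype.linearCombination_apply, Fin.sum_univ_four, cellP4Simplex, triangleP,
        triangleQ, Fin.succAbove] <;> norm_num

/-- The cell 𝒫₄ has 4-dimensional volume 1/4. -/
theorem cellP4_volume : volume cellP4 = ENNReal.ofReal (1 / 4) := by
  have hdisj : Pairwise fun j k => AEDisjoint volume (convexHull ℝ (range (cellP4Simplex j)))
      (convexHull ℝ (range (cellP4Simplex k))) := by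
    intro j k hjk
    rcases hjk.lt_or_gt with h | h
    exacts [volume_cellP4Simplex_inter h, AEDisjoint.symm (volume_cellP4Simplex_inter h)]
  have hmeas (j : Fin 3) : NullMeasurableSet (convexHull ℝ (range (cellP4Simplex j))) :=
    ((finite_range _).isCompact_convexHull (𝕜 := ℝ)).isClosed.measurableSet.nullMeasurableSet
  rw [cellP4_eq_iUnion, measure_iUnion₀ hdisj hmeas, tsum_fintype,
    Finset.sum_congr rfl fun j _ => volume_cellP4Simplex j,
    ← ENNReal.ofReal_sum_of_nonneg fun _ _ => by norm_num]
  norm_num
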